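/- Let a > 0 and b > 0 be real numbers and define f : ℝ → ℝ by f(x) = a·log σ(x) + b·log σ(−x). Then f is strictly concave on ℝ, and f attains its unique global maximum at x* = log(a/b). -/

import Mathlib

/-!
The objective has derivative `a - (a + b) σ(x)`, which is strictly decreasing since `σ` is, so the
objective is strictly concave; the derivative vanishes where `σ(x) = a / (a + b)`, i.e. at
`x = log (a / b)`, and a critical point of a strictly concave function is its strict maximum.
-/

/-- The logistic sigmoid function. -/
noncomputable def sigmoid (x : ℝ) : ℝ := 1 / (1 + Real.exp (-x))

lemma sigmoid_eq_real_sigmoid : sigmoid = Real.sigmoid :=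
  funext fun _ ↦ one_div _

lemma StrictConcaveOn.lt_of_hasDerivAt_eq_zero {S : Set ℝ} {f : ℝ → ℝ} {c x : ℝ}
    (hf : StrictConcaveOn ℝ S f) (hc : c ∈ S) (hx : x ∈ S) (hfc : HasDerivAt f 0 c)
    (hxc : x ≠ c) : f x < f c := by
  rcases hxc.lt_or_gt with hlt | hgt
  · exact (slope_pos_iff_of_le hlt.le).1 (hf.lt_slope_of_hasDerivAt hx hc hlt hfc)
  · exact (slope_neg_iff_of_le hgt.le).1 (hf.slope_lt_of_hasDerivAt hc hx hgt hfc)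

lemma Real.hasDerivAt_log_sigmoid (x : ℝ) :
    HasDerivAt (fun x ↦ Real.log (Real.sigmoid x)) (1 - Real.sigmoid x) x := by
  convert (Real.hasDerivAt_sigmoid x).log (Real.sigmoid_pos x).ne' using 1
  field [(Real.sigmoid_pos x).ne']

lemma Real.sigmoid_log_div {a b : ℝ} (ha : 0 < a) (hb : 0 < b) :
    Real.sigmoid (Real.log (a / b)) = a / (a + b) := by
  rw [Real.sigmoid_def, Real.exp_neg, Real.exp_log (by positivity)]
  field

noncomputable def sgnsObjective (a b x : ℝ) : ℝ :=
  a * Real.log (Real.sigmoid x) + b * Real.log (Real.sigmoid (-x))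

lemma hasDerivAt_sgnsObjective (a b x : ℝ) :
    HasDerivAt (sgnsObjective a b) (a - (a + b) * Real.sigmoid x) x := by
  have hneg := (Real.hasDerivAt_log_sigmoid (-x)).comp x (hasDerivAt_neg x)
  refine (((Real.hasDerivAt_log_sigmoid x).const_mul a).add (hneg.const_mul b)).congr_deriv ?_
  rw [Real.sigmoid_neg]
  ring

lemma strictConcaveOn_sgnsObjective {a b : ℝ} (hab : 0 < a + b) :
    StrictConcaveOn ℝ Set.univ (sgnsObjective a b) := by
  have hderiv : deriv (sgnsObjective a b) = fun x ↦ a - (a + b) * Real.sigmoid x :=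
    funext fun x ↦ (hasDerivAt_sgnsObjective a b x).deriv
  refine StrictAnti.strictConcaveOn_univ_of_deriv ?_ ?_
  · exact continuous_iff_continuousAt.2 fun x ↦ (hasDerivAt_sgnsObjective a b x).continuousAt
  · rw [hderiv]
    exact fun x y hxy ↦ sub_lt_sub_left
      (mul_lt_mul_of_pos_left (Real.sigmoid_strictMono hxy) hab) a

lemma hasDerivAt_sgnsObjective_log_div {a b : ℝ} (ha : 0 < a) (hb : 0 < b) :
    HasDerivAt (sgnsObjective a b) 0 (Real.log (a / b)) := by
  refine (hasDerivAt_sgnsObjective a b _).congr_deriv ?_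
  rw [Real.sigmoid_log_div ha hb]
  field

/-- The per-entry SGNS objective `f x = a·log σ(x) + b·log σ(−x)` (with
positive-sample weight `a > 0` and negative-sample weight `b > 0`) is strictly
concave on ℝ and attains its unique global maximum at `x* = log (a / b)`. -/
theorem sgns_per_entry_strictly_concave_unique_max
    (a b : ℝ) (ha : 0 < a) (hb : 0 < b)
    (f : ℝ → ℝ)
    (hf : ∀ x, f x = a * Real.log (sigmoid x) + b * Real.log (sigmoid (-x))) :
    StrictConcaveOn ℝ Set.univ f ∧
      ∀ x : ℝ, x ≠ Real.log (a / b) → f x < f (Real.log (a / b)) := by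
  obtain rfl : f = sgnsObjective a b := funext fun x ↦ by
    rw [hf, sgnsObjective, sigmoid_eq_real_sigmoid]
  have hconc := strictConcaveOn_sgnsObjective (add_pos ha hb)
  exact ⟨hconc, fun x hx ↦ hconc.lt_of_hasDerivAt_eq_zero (Set.mem_univ _) (Set.mem_univ _)
    (hasDerivAt_sgnsObjective_log_div ha hb) hx⟩
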